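/- arXiv:2312.07227 — 3 statements merged into one kernel-verified Lean document; each statement's English description precedes it below -/
import Mathlib

section
/- Subpath elimination (Lemma 2 of the paper): let f_i assign costs to paths via a monotone composition function, i.e., for any paths P, P' ending at the same vertex u and any extension Q from u to the goal, f_i(P) ≤ f_i(P') implies f_i(P ∪ Q) ≤ f_i(P' ∪ Q) for each i. If P' dominates P^u (f_i(P') ≤ f_i(P^u) for all i), then for every extension Q, the weighted-maximum cost satisfies max_i w_i f_i(P' ∪ Q) + ρ Σ_i f_i(P' ∪ Q) ≤ max_i w_i f_i(P^u ∪ Q) + ρ Σ_i f_i(P^u ∪ Q), so P^u cannot yield a strictly better complete path than P'. -/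
/-- Subpath elimination (Lemma 2): if `P'` dominates `Pu` and each objective is
monotone under the composition, then `Pu` cannot yield a strictly better complete
path than `P'` for the augmented weighted maximum cost. -/
theorem subpath_elimination
    {Path : Type*} (concat : Path → Path → Path) (n : ℕ)
    (f : Fin (n + 1) → Path → ℝ) (hf : ∀ i P, 0 ≤ f i P)
    (hmono : ∀ i (P P' Q : Path),
      f i P ≤ f i P' → f i (concat P Q) ≤ f i (concat P' Q))
    (w : Fin (n + 1) → ℝ) (hw : ∀ i, 0 ≤ w i) (ρ : ℝ) (hρ : 0 ≤ ρ)
    (P' Pu : Path) (hdom : ∀ i, f i P' ≤ f i Pu) :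
    ∀ Q : Path,
      (Finset.univ.sup' Finset.univ_nonempty fun i => w i * f i (concat P' Q))
        + ρ * ∑ i, f i (concat P' Q) ≤
      (Finset.univ.sup' Finset.univ_nonempty fun i => w i * f i (concat Pu Q))
        + ρ * ∑ i, f i (concat Pu Q) := by
  intro Q
  have key : ∀ i, f i (concat P' Q) ≤ f i (concat Pu Q) :=
    fun i => hmono i _ _ Q (hdom i)
  refine add_le_add ?_ (mul_le_mul_of_nonneg_left (Finset.sum_le_sum fun i _ => key i) hρ)
  exact Finset.sup'_mono_fun (fun i _ => mul_le_mul_of_nonneg_left (key i) (hw i))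
end

section
/- The set of weighted-sum-attainable solutions is contained in the set of augmented-Chebyshev-attainable solutions for finite 𝒯 with strictly positive objectives: if T* is the unique minimizer of Σ_i w_i f_i over 𝒯 for some w with w_i > 0, then there exist weights w' with w'_i > 0 and ρ > 0 such that T* minimizes max_i w'_i f_i(T) + ρ Σ_i f_i(T). -/
/-!
A unique minimiser `T*` of a positively weighted sum is strictly Pareto optimal: every other `T`
is strictly worse than `T*` in some objective. Taking the Chebyshev weights `w'ᵢ = 1 / fᵢ(T*)`
makes the Chebyshev term equal to `1` at `T*` and larger than `1` everywhere else. As `𝒯` is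
finite these excesses are at least some `δ > 0`, and the augmentation `ρ ∑ᵢ fᵢ` with
`ρ ∑ᵢ fᵢ(T*) = δ` is then too small to change the minimiser.
-/

open Filter Topology

theorem exists_lt_of_weighted_sum_lt {ι R : Type*} [Semiring R] [LinearOrder R]
    [IsStrictOrderedRing R] {s : Finset ι} {w x y : ι → R} (hw : ∀ i ∈ s, 0 ≤ w i)
    (h : ∑ i ∈ s, w i * x i < ∑ i ∈ s, w i * y i) : ∃ i ∈ s, x i < y i := by
  obtain ⟨i, hi, hlt⟩ := Finset.exists_lt_of_sum_lt h
  exact ⟨i, hi, lt_of_mul_lt_mul_left hlt (hw i hi)⟩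

theorem exists_pos_forall_add_le_of_forall_lt {α : Type*} [Finite α] {p : α → Prop}
    {g : α → ℝ} {a : ℝ} (h : ∀ t, p t → a < g t) : ∃ δ > 0, ∀ t, p t → a + δ ≤ g t := by
  have hsmall : ∀ᶠ δ in 𝓝[>] (0 : ℝ), ∀ t, p t → a + δ ≤ g t := by
    refine eventually_all.2 fun t => ?_
    by_cases ht : p t
    · filter_upwards [nhdsWithin_le_nhds (eventually_lt_nhds (sub_pos.2 (h t ht)))]
        with δ hδ _
      linarith
    · exact Eventually.of_forall fun _ ht' => absurd ht' ht
  obtain ⟨δ, hle, hpos⟩ := (hsmall.and self_mem_nhdsWithin).exists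
  exact ⟨δ, hpos, hle⟩

section Chebyshev

variable {ι : Type*} [Fintype ι] [Nonempty ι]

def augmentedChebyshev (w : ι → ℝ) (ρ : ℝ) (y : ι → ℝ) : ℝ :=
  Finset.univ.sup' Finset.univ_nonempty (fun i => w i * y i) + ρ * ∑ i, y i

theorem sup'_inv_mul_self {x : ι → ℝ} (hx : ∀ i, x i ≠ 0) :
    Finset.univ.sup' Finset.univ_nonempty (fun i => (x i)⁻¹ * x i) = 1 := by
  simp only [inv_mul_cancel₀ (hx _), Finset.sup'_const]

theorem one_lt_sup'_inv_mul {x y : ι → ℝ} (hx : ∀ i, 0 < x i) (h : ∃ i, x i < y i) :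
    1 < Finset.univ.sup' Finset.univ_nonempty (fun i => (x i)⁻¹ * y i) := by
  obtain ⟨i, hi⟩ := h
  refine (Finset.lt_sup'_iff _).2 ⟨i, Finset.mem_univ i, (lt_inv_mul_iff₀ (hx i)).2 ?_⟩
  rwa [mul_one]

theorem exists_augmentedChebyshev_le_of_forall_ne_exists_lt {𝒯 : Type*} [Finite 𝒯]
    {f : ι → 𝒯 → ℝ} (hf : ∀ i T, 0 < f i T) {T₀ : 𝒯}
    (hpareto : ∀ T ≠ T₀, ∃ i, f i T₀ < f i T) :
    ∃ (w : ι → ℝ) (ρ : ℝ), (∀ i, 0 < w i) ∧ 0 < ρ ∧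
      ∀ T, augmentedChebyshev w ρ (f · T₀) ≤ augmentedChebyshev w ρ (f · T) := by
  obtain ⟨δ, hδ, hgap⟩ := exists_pos_forall_add_le_of_forall_lt fun T (hT : T ≠ T₀) =>
    one_lt_sup'_inv_mul (y := (f · T)) (fun i => hf i T₀) (hpareto T hT)
  have hsum : 0 < ∑ i, f i T₀ := Finset.sum_pos (fun i _ => hf i T₀) Finset.univ_nonempty
  have hρ : 0 < δ / ∑ i, f i T₀ := div_pos hδ hsum
  refine ⟨fun i => (f i T₀)⁻¹, δ / ∑ i, f i T₀, fun i => inv_pos.2 (hf i T₀), hρ, fun T => ?_⟩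
  rcases eq_or_ne T T₀ with rfl | hT
  · exact le_rfl
  calc augmentedChebyshev (fun i => (f i T₀)⁻¹) (δ / ∑ i, f i T₀) (f · T₀) = 1 + δ := by
        rw [augmentedChebyshev, sup'_inv_mul_self fun i => (hf i T₀).ne',
          div_mul_cancel₀ _ hsum.ne']
    _ ≤ Finset.univ.sup' Finset.univ_nonempty (fun i => (f i T₀)⁻¹ * f i T) := hgap T hT
    _ ≤ _ := le_add_of_nonneg_right <|
        mul_nonneg hρ.le (Finset.sum_nonneg fun i _ => (hf i T).le)

end Chebyshev

theorem weighted_sum_attainable_subset_chebyshev_attainable_general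
    {𝒯 : Type*} [Fintype 𝒯] (n : ℕ)
    (f : Fin (n + 1) → 𝒯 → ℝ) (hf : ∀ i T, 0 < f i T)
    (w : Fin (n + 1) → ℝ) (hw : ∀ i, 0 < w i)
    (Tstar : 𝒯)
    (hmin : ∀ T : 𝒯, T ≠ Tstar →
      ∑ i, w i * f i Tstar < ∑ i, w i * f i T) :
    ∃ (w' : Fin (n + 1) → ℝ) (ρ : ℝ), (∀ i, 0 < w' i) ∧ 0 < ρ ∧
      ∀ T : 𝒯,
        (Finset.univ.sup' Finset.univ_nonempty fun i => w' i * f i Tstar)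
          + ρ * ∑ i, f i Tstar ≤
        (Finset.univ.sup' Finset.univ_nonempty fun i => w' i * f i T)
          + ρ * ∑ i, f i T := by
  have hpareto : ∀ T ≠ Tstar, ∃ i, f i Tstar < f i T := fun T hT => by
    simpa using exists_lt_of_weighted_sum_lt (fun i _ => (hw i).le) (hmin T hT)
  exact exists_augmentedChebyshev_le_of_forall_ne_exists_lt hf hpareto

/-- Every solution attainable as the unique minimizer of a weighted sum with
positive weights is also attainable by the augmented Chebyshev scalarization. -/
theorem weighted_sum_attainable_subset_chebyshev_attainable
    {𝒯 : Type*} [Nonempty 𝒯] [Fintype 𝒯] (n : ℕ)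
    (f : Fin (n + 1) → 𝒯 → ℝ) (hf : ∀ i T, 0 < f i T)
    (w : Fin (n + 1) → ℝ) (hw : ∀ i, 0 < w i)
    (Tstar : 𝒯)
    (hmin : ∀ T : 𝒯, T ≠ Tstar →
      ∑ i, w i * f i Tstar < ∑ i, w i * f i T) :
    ∃ (w' : Fin (n + 1) → ℝ) (ρ : ℝ), (∀ i, 0 < w' i) ∧ 0 < ρ ∧
      ∀ T : 𝒯,
        (Finset.univ.sup' Finset.univ_nonempty fun i => w' i * f i Tstar)
          + ρ * ∑ i, f i Tstar ≤
        (Finset.univ.sup' Finset.univ_nonempty fun i => w' i * f i T)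
          + ρ * ∑ i, f i T :=
  weighted_sum_attainable_subset_chebyshev_attainable_general n f hf w hw Tstar hmin
end

section
/- For any Pareto-optimal point T* of a finite set with strictly positive objectives, choosing weights w_i = 1/f_i(T*) gives max_i w_i f_i(T*) = 1 ≤ max_i w_i f_i(T) for all T ∈ 𝒯, i.e., T* minimizes the Chebyshev cost with these weights. -/
/-!
With weights `1 / f i T*`, the Chebyshev cost of `T` drops below `1` exactly when `T` beats `T*`
in every objective, and such strict domination is in particular Pareto domination.
-/

open Finset

noncomputable def chebyshevCost {ι : Type*} [Fintype ι] [Nonempty ι] (w g : ι → ℝ) : ℝ :=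
  univ.sup' univ_nonempty fun i => w i * g i

section Chebyshev

variable {ι : Type*} [Fintype ι] [Nonempty ι] {u v : ι → ℝ}

theorem chebyshevCost_one_div_self (hv : ∀ i, 0 < v i) :
    chebyshevCost (fun i => 1 / v i) v = 1 := by
  simp only [chebyshevCost, one_div_mul_cancel (hv _).ne', sup'_const]

theorem one_le_chebyshevCost_one_div_iff (hv : ∀ i, 0 < v i) :
    1 ≤ chebyshevCost (fun i => 1 / v i) u ↔ ∃ i, v i ≤ u i := by
  simp only [chebyshevCost, le_sup'_iff, mem_univ, true_and, one_div,
    le_inv_mul_iff₀ (hv _), mul_one]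

end Chebyshev

-- In the product order, `u < v` is Pareto dominance of `v` by `u` (`Pi.lt_def`).
theorem exists_le_of_not_lt {ι α : Type*} [Nonempty ι] [LinearOrder α] {u v : ι → α}
    (h : ¬ u < v) : ∃ i, v i ≤ u i := by
  by_contra! hlt
  exact h (StrongLT.lt hlt)

theorem chebyshev_weights_from_pareto_point_general
    {𝒯 : Type*} (n : ℕ)
    (f : Fin (n + 1) → 𝒯 → ℝ) (hf : ∀ i T, 0 < f i T)
    (Tstar : 𝒯)
    (hpo : ¬ ∃ T : 𝒯, (∀ i, f i T ≤ f i Tstar) ∧ (∃ j, f j T < f j Tstar)) :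
    (Finset.univ.sup' Finset.univ_nonempty
        fun i => (1 / f i Tstar) * f i Tstar) = 1 ∧
    ∀ T : 𝒯, (1 : ℝ) ≤
      Finset.univ.sup' Finset.univ_nonempty fun i => (1 / f i Tstar) * f i T := by
  refine ⟨chebyshevCost_one_div_self (hf · Tstar), fun T => ?_⟩
  have hundominated : ¬ (fun i => f i T) < fun i => f i Tstar :=
    fun hlt => hpo ⟨T, Pi.lt_def.mp hlt⟩
  exact (one_le_chebyshevCost_one_div_iff (hf · Tstar)).mpr (exists_le_of_not_lt hundominated)

/-- For a Pareto-optimal `T*`, the weights `w i = 1 / f i T*` make `T*` a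
minimizer of the Chebyshev cost, with optimal value `1`. -/
theorem chebyshev_weights_from_pareto_point
    {𝒯 : Type*} [Nonempty 𝒯] [Fintype 𝒯] (n : ℕ)
    (f : Fin (n + 1) → 𝒯 → ℝ) (hf : ∀ i T, 0 < f i T)
    (Tstar : 𝒯)
    (hpo : ¬ ∃ T : 𝒯, (∀ i, f i T ≤ f i Tstar) ∧ (∃ j, f j T < f j Tstar)) :
    (Finset.univ.sup' Finset.univ_nonempty
        fun i => (1 / f i Tstar) * f i Tstar) = 1 ∧
    ∀ T : 𝒯, (1 : ℝ) ≤
      Finset.univ.sup' Finset.univ_nonempty fun i => (1 / f i Tstar) * f i T :=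
  chebyshev_weights_from_pareto_point_general n f hf Tstar hpo
end
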